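/- arXiv:1905.10940 — 3 statements merged into one kernel-verified Lean document; each statement's English description precedes it below -/
import Mathlib

section
/- In the zero-noise setting, the MMSE-optimal filter achieves perfect signal recovery: if Y = x·h + x'·h' with h, h' linearly independent in ℂⁿ, x and x' independent zero-mean random variables with E[|x|²] > 0, E[|x'|²] > 0, then the filter G = E[YY*]⁺ E[Y x̄] satisfies ⟨G, Y⟩ = x almost surely. -/
open MeasureTheory Matrix Finset
open scoped ComplexConjugate BigOperators

noncomputable section

/-- Hermitian inner product on `Fin n → ℂ`, conjugate-linear in the first slot. -/
def herm {n : ℕ} (G Y : Fin n → ℂ) : ℂ := ∑ i, conj (G i) * Y i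

/-- Squared Euclidean norm. -/
def sqNorm {n : ℕ} (G : Fin n → ℂ) : ℝ := ∑ i, ‖G i‖ ^ 2

/-- The four Penrose conditions: `Rp` is the Moore–Penrose pseudoinverse of `R`. -/
def IsPinv {n : ℕ} (R Rp : Matrix (Fin n) (Fin n) ℂ) : Prop :=
  R * Rp * R = R ∧ Rp * R * Rp = Rp ∧ (R * Rp)ᴴ = R * Rp ∧ (Rp * R)ᴴ = Rp * R

/-- Mean square error `E[|⟨G,Y⟩ − X|²]`. -/
def mse {n : ℕ} {Ω : Type} [MeasurableSpace Ω] (μ : Measure Ω)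
    (Y : Ω → Fin n → ℂ) (X : Ω → ℂ) (G : Fin n → ℂ) : ℝ :=
  ∫ ω, ‖herm G (Y ω) - X ω‖ ^ 2 ∂μ

/-- Second-moment matrix `R = E[Y Y*]`. -/
def secondMoment {n : ℕ} {Ω : Type} [MeasurableSpace Ω] (μ : Measure Ω)
    (Y : Ω → Fin n → ℂ) : Matrix (Fin n) (Fin n) ℂ :=
  Matrix.of fun i j => ∫ ω, Y ω i * conj (Y ω j) ∂μ

/-- Cross-correlation vector `r = E[Y conj(X)]`. -/
def crossCorr {n : ℕ} {Ω : Type} [MeasurableSpace Ω] (μ : Measure Ω)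
    (Y : Ω → Fin n → ℂ) (X : Ω → ℂ) : Fin n → ℂ :=
  fun i => ∫ ω, Y ω i * conj (X ω) ∂μ

/-!
Put `a = E|x|²` and `b = E|x'|²`. Independence and `E x = 0` make `x` and `x'` uncorrelated, so
`R = E[YY*] = a h h* + b h' h'*` and `E[Y x̄] = a h`. Linear independence of `h, h'` gives vectors
`u, u'` with `⟨h, u⟩ = ⟨h', u'⟩ = 1` and `⟨h', u⟩ = ⟨h, u'⟩ = 0`, hence `R u = a h` and `R u' = b h'`:
both `E[Y x̄]` and every value `Y = x h + x' h'` lie in the range of `R`. On that range any `R⁺` with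
`R R⁺ R = R` is invisible, since `⟨R⁺ R u, R v⟩ = ⟨R R⁺ R u, v⟩ = ⟨R u, v⟩` for Hermitian `R`, so
`⟨G, Y⟩ = ⟨a h, (x / a) u + (x' / b) u'⟩ = x`.
-/


section Herm

variable {n : ℕ}

theorem herm_eq_star_dotProduct (G Y : Fin n → ℂ) : herm G Y = star G ⬝ᵥ Y := rfl

theorem herm_mulVec_left (A : Matrix (Fin n) (Fin n) ℂ) (G Y : Fin n → ℂ) :
    herm (A *ᵥ G) Y = herm G (Aᴴ *ᵥ Y) := by
  simp only [herm_eq_star_dotProduct, star_mulVec, dotProduct_mulVec]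

theorem herm_smul_left (c : ℂ) (G Y : Fin n → ℂ) : herm (c • G) Y = conj c * herm G Y := by
  simp only [herm_eq_star_dotProduct, star_smul, smul_dotProduct, smul_eq_mul, Complex.star_def]

theorem herm_add_right (G Y Z : Fin n → ℂ) : herm G (Y + Z) = herm G Y + herm G Z :=
  dotProduct_add _ _ _

theorem herm_smul_right (c : ℂ) (G Y : Fin n → ℂ) : herm G (c • Y) = c * herm G Y :=
  dotProduct_smul _ _ _

theorem Matrix.IsHermitian.herm_mulVec_mulVec_of_mul_mul_eq {R Rp : Matrix (Fin n) (Fin n) ℂ}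
    (hR : R.IsHermitian) (hRRpR : R * Rp * R = R) (u v : Fin n → ℂ) :
    herm (Rp *ᵥ R *ᵥ u) (R *ᵥ v) = herm (R *ᵥ u) v := by
  calc herm (Rp *ᵥ R *ᵥ u) (R *ᵥ v) = herm (Rp *ᵥ R *ᵥ u) (Rᴴ *ᵥ v) := by rw [hR.eq]
    _ = herm ((R * Rp * R) *ᵥ u) v := by
      rw [← herm_mulVec_left, mulVec_mulVec, mulVec_mulVec, Matrix.mul_assoc]
    _ = herm (R *ᵥ u) v := by rw [hRRpR]

open scoped ComplexOrder in
theorem exists_herm_eq_of_linearIndependent {ι : Type*} [Fintype ι] {v : ι → Fin n → ℂ}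
    (hv : LinearIndependent ℂ v) (c : ι → ℂ) : ∃ u, ∀ k, herm (v k) u = c k := by
  set C : Matrix ι (Fin n) ℂ := (Matrix.of v)ᴴᵀ
  have hrank : C.rank = Fintype.card ι := by
    rw [rank_transpose, rank_conjTranspose]
    exact hv.rank_matrix
  have hsurj : Function.Surjective C.mulVecLin := by
    rw [← LinearMap.range_eq_top]
    apply Submodule.eq_top_of_finrank_eq
    rw [← rank, hrank, Module.finrank_fintype_fun_eq_card]
  obtain ⟨u, hu⟩ := hsurj c
  exact ⟨u, fun k => congrFun hu k⟩

end Herm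

section TwoSources

variable {n : ℕ} {h h' : Fin n → ℂ} {a b : ℝ}

theorem smul_vecMulVec_add_smul_vecMulVec_mulVec (v : Fin n → ℂ) :
    ((a : ℂ) • vecMulVec h (star h) + (b : ℂ) • vecMulVec h' (star h')) *ᵥ v =
      (a * herm h v) • h + (b * herm h' v) • h' := by
  rw [add_mulVec, smul_mulVec, smul_mulVec, vecMulVec_mulVec, vecMulVec_mulVec, op_smul_eq_smul,
    op_smul_eq_smul, smul_smul, smul_smul]
  rfl

theorem isHermitian_smul_vecMulVec_add_smul_vecMulVec :
    ((a : ℂ) • vecMulVec h (star h) + (b : ℂ) • vecMulVec h' (star h')).IsHermitian := by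
  simp [IsHermitian, conjTranspose_add, conjTranspose_smul, conjTranspose_vecMulVec]

theorem herm_mulVec_smul_smul_add_smul_of_mul_mul_eq (hli : LinearIndependent ℂ ![h, h'])
    (ha : a ≠ 0) (hb : b ≠ 0) {R Rp : Matrix (Fin n) (Fin n) ℂ}
    (hR : R = (a : ℂ) • vecMulVec h (star h) + (b : ℂ) • vecMulVec h' (star h'))
    (hRp : R * Rp * R = R) (c c' : ℂ) :
    herm (Rp *ᵥ ((a : ℂ) • h)) (c • h + c' • h') = c := by
  have ha' : (a : ℂ) ≠ 0 := Complex.ofReal_ne_zero.2 ha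
  have hb' : (b : ℂ) ≠ 0 := Complex.ofReal_ne_zero.2 hb
  obtain ⟨u, hu⟩ := exists_herm_eq_of_linearIndependent hli ![1, 0]
  obtain ⟨u', hu'⟩ := exists_herm_eq_of_linearIndependent hli ![0, 1]
  simp only [Fin.forall_fin_two, cons_val_zero, cons_val_one] at hu hu'
  have hRu : R *ᵥ u = (a : ℂ) • h := by
    rw [hR, smul_vecMulVec_add_smul_vecMulVec_mulVec, hu.1, hu.2, mul_one, mul_zero, zero_smul,
      add_zero]
  have hRu' : R *ᵥ u' = (b : ℂ) • h' := by
    rw [hR, smul_vecMulVec_add_smul_vecMulVec_mulVec, hu'.1, hu'.2, mul_one, mul_zero, zero_smul,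
      zero_add]
  have hcomb : c • h + c' • h' = R *ᵥ ((c / a) • u + (c' / b) • u') := by
    rw [mulVec_add, mulVec_smul, mulVec_smul, hRu, hRu', smul_smul, smul_smul,
      div_mul_cancel₀ _ ha', div_mul_cancel₀ _ hb']
  have hRherm : R.IsHermitian := hR ▸ isHermitian_smul_vecMulVec_add_smul_vecMulVec
  rw [← hRu, hcomb, hRherm.herm_mulVec_mulVec_of_mul_mul_eq hRp, hRu, herm_smul_left,
    herm_add_right, herm_smul_right, herm_smul_right, hu.1, hu'.1, Complex.conj_ofReal, mul_one,
    mul_zero, add_zero, mul_div_cancel₀ _ ha']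

end TwoSources

section Moments

variable {Ω : Type} [MeasurableSpace Ω] {μ : Measure Ω} {n : ℕ}

theorem integral_mul_conj_self (x : Ω → ℂ) :
    ∫ ω, x ω * conj (x ω) ∂μ = ((∫ ω, ‖x ω‖ ^ 2 ∂μ : ℝ) : ℂ) := by
  simp_rw [Complex.mul_conj', ← Complex.ofReal_pow]
  exact integral_ofReal

theorem integral_mul_conj_comm (x z : Ω → ℂ) :
    ∫ ω, z ω * conj (x ω) ∂μ = conj (∫ ω, x ω * conj (z ω) ∂μ) := by
  simp [← integral_conj, mul_comm]

theorem MeasureTheory.MemLp.integrable_mul_conj {x z : Ω → ℂ} (hx : MemLp x 2 μ)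
    (hz : MemLp z 2 μ) : Integrable (fun ω => x ω * conj (z ω)) μ :=
  hx.integrable_mul (q := 2) hz.star

theorem ProbabilityTheory.IndepFun.integral_mul_conj {x x' : Ω → ℂ} (hind : IndepFun x x' μ)
    (hx : AEStronglyMeasurable x μ) (hx' : AEStronglyMeasurable x' μ) :
    ∫ ω, x ω * conj (x' ω) ∂μ = (∫ ω, x ω ∂μ) * conj (∫ ω, x' ω ∂μ) := by
  rw [← integral_conj]
  exact (hind.comp measurable_id Complex.continuous_conj.measurable).integral_fun_mul_eq_mul_integral
    hx (Complex.continuous_conj.comp_aestronglyMeasurable hx')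

theorem crossCorr_smul_add_smul (h h' : Fin n → ℂ) {x x' z : Ω → ℂ} (hx : MemLp x 2 μ)
    (hx' : MemLp x' 2 μ) (hz : MemLp z 2 μ) :
    crossCorr μ (fun ω => x ω • h + x' ω • h') z =
      (∫ ω, x ω * conj (z ω) ∂μ) • h + (∫ ω, x' ω * conj (z ω) ∂μ) • h' := by
  ext i
  have hexp : ∀ ω, (x ω * h i + x' ω * h' i) * conj (z ω) =
      x ω * conj (z ω) * h i + x' ω * conj (z ω) * h' i := fun ω => by ring
  simp only [crossCorr, Pi.add_apply, Pi.smul_apply, smul_eq_mul, hexp]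
  rw [integral_add ((hx.integrable_mul_conj hz).mul_const _)
    ((hx'.integrable_mul_conj hz).mul_const _), integral_mul_const, integral_mul_const]

theorem secondMoment_smul_add_smul (h h' : Fin n → ℂ) {x x' : Ω → ℂ} (hx : MemLp x 2 μ)
    (hx' : MemLp x' 2 μ) (horth : ∫ ω, x ω * conj (x' ω) ∂μ = 0) :
    secondMoment μ (fun ω => x ω • h + x' ω • h') =
      ((∫ ω, ‖x ω‖ ^ 2 ∂μ : ℝ) : ℂ) • vecMulVec h (star h) +
        ((∫ ω, ‖x' ω‖ ^ 2 ∂μ : ℝ) : ℂ) • vecMulVec h' (star h') := by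
  have hY : ∀ j, MemLp (fun ω => (x ω • h + x' ω • h') j) 2 μ := fun j =>
    (hx.mul_const (h j)).add (hx'.mul_const (h' j))
  have horth' : ∫ ω, x' ω * conj (x ω) ∂μ = 0 := by rw [integral_mul_conj_comm, horth, map_zero]
  have hcorr (z : Ω → ℂ) (j : Fin n) :
      ∫ ω, z ω * conj ((x ω • h + x' ω • h') j) ∂μ =
        conj (crossCorr μ (fun ω => x ω • h + x' ω • h') z j) :=
    integral_mul_conj_comm _ _
  ext i j
  change crossCorr μ _ (fun ω => (x ω • h + x' ω • h') j) i = _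
  rw [crossCorr_smul_add_smul h h' hx hx' (hY j), hcorr x, hcorr x',
    crossCorr_smul_add_smul h h' hx hx' hx, crossCorr_smul_add_smul h h' hx hx' hx', horth, horth',
    integral_mul_conj_self, integral_mul_conj_self]
  simp [vecMulVec_apply, mul_comm, mul_left_comm]

end Moments

theorem bic_perfect_recovery_general {n : ℕ} {Ω : Type} [MeasurableSpace Ω]
    (μ : Measure Ω)
    (h h' : Fin n → ℂ) (hli : LinearIndependent ℂ ![h, h'])
    (x x' : Ω → ℂ) (hx2 : MemLp x 2 μ) (hx'2 : MemLp x' 2 μ)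
    (hindep : ProbabilityTheory.IndepFun x x' μ)
    (hmx : ∫ ω, x ω ∂μ = 0)
    (hvx : 0 < ∫ ω, ‖x ω‖ ^ 2 ∂μ) (hvx' : 0 < ∫ ω, ‖x' ω‖ ^ 2 ∂μ)
    (Y : Ω → Fin n → ℂ) (hYdef : ∀ ω, Y ω = x ω • h + x' ω • h')
    (Rp : Matrix (Fin n) (Fin n) ℂ) (hRp : IsPinv (secondMoment μ Y) Rp) :
    ∀ᵐ ω ∂μ, herm (Rp.mulVec (crossCorr μ Y x)) (Y ω) = x ω := by
  obtain rfl : Y = fun ω => x ω • h + x' ω • h' := funext hYdef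
  have horth : ∫ ω, x ω * conj (x' ω) ∂μ = 0 := by
    rw [hindep.integral_mul_conj hx2.1 hx'2.1, hmx, zero_mul]
  have hcorr : crossCorr μ (fun ω => x ω • h + x' ω • h') x =
      ((∫ ω, ‖x ω‖ ^ 2 ∂μ : ℝ) : ℂ) • h := by
    rw [crossCorr_smul_add_smul h h' hx2 hx'2 hx2, integral_mul_conj_self, integral_mul_conj_comm,
      horth, map_zero, zero_smul, add_zero]
  refine ae_of_all μ fun ω => ?_
  rw [hcorr]
  exact herm_mulVec_smul_smul_add_smul_of_mul_mul_eq hli hvx.ne' hvx'.ne'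
    (secondMoment_smul_add_smul h h' hx2 hx'2 horth) hRp.1 (x ω) (x' ω)

theorem bic_perfect_recovery {n : ℕ} (hn : 2 ≤ n) {Ω : Type} [MeasurableSpace Ω]
    (μ : Measure Ω) [IsProbabilityMeasure μ]
    (h h' : Fin n → ℂ) (hli : LinearIndependent ℂ ![h, h'])
    (x x' : Ω → ℂ) (hx2 : MemLp x 2 μ) (hx'2 : MemLp x' 2 μ)
    (hindep : ProbabilityTheory.IndepFun x x' μ)
    (hmx : ∫ ω, x ω ∂μ = 0) (hmx' : ∫ ω, x' ω ∂μ = 0)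
    (hvx : 0 < ∫ ω, ‖x ω‖ ^ 2 ∂μ) (hvx' : 0 < ∫ ω, ‖x' ω‖ ^ 2 ∂μ)
    (Y : Ω → Fin n → ℂ) (hYdef : ∀ ω, Y ω = x ω • h + x' ω • h')
    (Rp : Matrix (Fin n) (Fin n) ℂ) (hRp : IsPinv (secondMoment μ Y) Rp) :
    ∀ᵐ ω ∂μ, herm (Rp.mulVec (crossCorr μ Y x)) (Y ω) = x ω :=
  bic_perfect_recovery_general μ h h' hli x x' hx2 hx'2 hindep hmx hvx hvx' Y hYdef Rp hRp
end
end

section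
/- Two pilot observations with linearly independent pilot pairs suffice for exact filter construction: if (x₁, x'₁) and (x₂, x'₂) are linearly independent in ℂ², and Y_q = x_q h + x'_q h' with h, h' ∈ ℂⁿ linearly independent, then G = (Σ_{q=1}^{2} Y_q Y_q*)⁺ (Σ_{q=1}^{2} Y_q x̄_q) satisfies ⟨G, h⟩ = 1 and ⟨G, h'⟩ = 0. -/
open MeasureTheory Matrix Finset
open scoped ComplexConjugate BigOperators

noncomputable section

/-! Write `Y = H Xᵀ` for the `n × 2` matrix of observations, where `H = [h h']` has full column
rank and the pilot matrix `X` is invertible; then `Y` has full column rank and its Gram matrix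
`YᴴY` is invertible. For `R = YYᴴ` and any `P` with `RPR = R`, cancelling `YᴴY` on both sides of
`YᴴY (YᴴPY) YᴴY = Yᴴ(RPR)Y = (YᴴY)²` gives `YᴴPY = 1`. Hence the filter `G = P Y x̄` satisfies
`Gᴴ Y = xᵀ`, i.e. `(Gᴴ H) Xᵀ = e₀ᵀ Xᵀ`, and invertibility of `X` leaves `Gᴴ H = e₀ᵀ`. -/

open scoped ComplexOrder

namespace Matrix

theorem mulVec_injective_mul {α l m n : Type*} [NonUnitalSemiring α] [Fintype m] [Fintype n]
    {A : Matrix l m α} {B : Matrix m n α} (hA : Function.Injective A.mulVec)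
    (hB : Function.Injective B.mulVec) : Function.Injective (A * B).mulVec := fun v w hvw =>
  hB (hA (by simpa only [mulVec_mulVec] using hvw))

variable {𝕜 m n : Type*} [RCLike 𝕜] [Fintype m] [Fintype n] [DecidableEq m]

theorem conjTranspose_mul_mul_eq_one_of_injective {Y : Matrix n m 𝕜} {P : Matrix n n 𝕜}
    (hY : Function.Injective Y.mulVec) (hP : Y * Yᴴ * P * (Y * Yᴴ) = Y * Yᴴ) :
    Yᴴ * P * Y = 1 := by
  have hGram : IsUnit (Yᴴ * Y) := (PosDef.conjTranspose_mul_self Y hY).isUnit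
  refine hGram.mul_left_cancel (hGram.mul_right_cancel ?_)
  calc Yᴴ * Y * (Yᴴ * P * Y) * (Yᴴ * Y) = Yᴴ * (Y * Yᴴ * P * (Y * Yᴴ)) * Y := by
        simp only [Matrix.mul_assoc]
    _ = Yᴴ * Y * 1 * (Yᴴ * Y) := by rw [hP]; simp only [Matrix.mul_one, Matrix.mul_assoc]

theorem star_mulVec_mulVec_vecMul_of_injective {Y : Matrix n m 𝕜} {P : Matrix n n 𝕜}
    (hY : Function.Injective Y.mulVec) (hP : Y * Yᴴ * P * (Y * Yᴴ) = Y * Yᴴ) (c : m → 𝕜) :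
    star (P *ᵥ (Y *ᵥ c)) ᵥ* Y = star c := by
  have hPY : Yᴴ * Pᴴ * Y = 1 := by
    simpa [Matrix.mul_assoc] using
      congrArg conjTranspose (conjTranspose_mul_mul_eq_one_of_injective hY hP)
  rw [star_mulVec, star_mulVec, vecMul_vecMul, vecMul_vecMul, ← Matrix.mul_assoc, hPY, vecMul_one]

end Matrix

theorem two_pilots_suffice_general {n : ℕ}
    (h h' : Fin n → ℂ) (hli : LinearIndependent ℂ ![h, h'])
    (x x' : Fin 2 → ℂ)
    (hpilots : LinearIndependent ℂ ![(![x 0, x' 0] : Fin 2 → ℂ), ![x 1, x' 1]])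
    (Y : Fin 2 → Fin n → ℂ) (hYdef : ∀ q, Y q = x q • h + x' q • h')
    (Ap : Matrix (Fin n) (Fin n) ℂ)
    (hAp : IsPinv (∑ q, vecMulVec (Y q) (star (Y q))) Ap) :
    herm (Ap.mulVec (∑ q, conj (x q) • Y q)) h = 1 ∧
      herm (Ap.mulVec (∑ q, conj (x q) • Y q)) h' = 0 := by
  set X : Matrix (Fin 2) (Fin 2) ℂ := Matrix.of ![![x 0, x' 0], ![x 1, x' 1]]
  set H : Matrix (Fin n) (Fin 2) ℂ := (Matrix.of ![h, h'])ᵀ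
  have hX : IsUnit X := linearIndependent_rows_iff_isUnit.mp hpilots
  have hH : Function.Injective H.mulVec := mulVec_injective_iff.mpr hli
  have hYmat : (Matrix.of Y)ᵀ = H * Xᵀ := by
    ext i q; fin_cases q <;> simp [H, X, hYdef, mul_apply, Fin.sum_univ_two, mul_comm]
  have hYinj : Function.Injective (H * Xᵀ).mulVec :=
    mulVec_injective_mul hH (mulVec_injective_iff_isUnit.mpr ((isUnit_transpose _).mpr hX))
  have hR : ∑ q, vecMulVec (Y q) (star (Y q)) = H * Xᵀ * (H * Xᵀ)ᴴ := by
    rw [← hYmat]; ext i j; simp [mul_apply, vecMulVec_apply, Fin.sum_univ_two]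
  have hr : ∑ q, conj (x q) • Y q = (H * Xᵀ) *ᵥ star x := by
    rw [← hYmat]; ext i; simp [mulVec, dotProduct, Fin.sum_univ_two, mul_comm]
  rw [hR] at hAp
  rw [hr]
  have hfilter := star_mulVec_mulVec_vecMul_of_injective hYinj hAp.1 (star x)
  rw [star_star, ← vecMul_vecMul, vecMul_transpose] at hfilter
  have hcoeffs : star (Ap *ᵥ ((H * Xᵀ) *ᵥ star x)) ᵥ* H = Pi.single 0 1 :=
    mulVec_injective_iff_isUnit.mpr hX (by
      rw [hfilter]; ext q; fin_cases q <;> simp [X, mulVec, dotProduct, Fin.sum_univ_two])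
  exact ⟨congrFun hcoeffs 0, congrFun hcoeffs 1⟩

theorem two_pilots_suffice {n : ℕ} (hn : 2 ≤ n)
    (h h' : Fin n → ℂ) (hli : LinearIndependent ℂ ![h, h'])
    (x x' : Fin 2 → ℂ)
    (hpilots : LinearIndependent ℂ ![(![x 0, x' 0] : Fin 2 → ℂ), ![x 1, x' 1]])
    (Y : Fin 2 → Fin n → ℂ) (hYdef : ∀ q, Y q = x q • h + x' q • h')
    (Ap : Matrix (Fin n) (Fin n) ℂ)
    (hAp : IsPinv (∑ q, vecMulVec (Y q) (star (Y q))) Ap) :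
    herm (Ap.mulVec (∑ q, conj (x q) • Y q)) h = 1 ∧
      herm (Ap.mulVec (∑ q, conj (x q) • Y q)) h' = 0 :=
  two_pilots_suffice_general h h' hli x x' hpilots Y hYdef Ap hAp
end
end

section
/- Generalization of Lemma 1 to multiple interferers: if Y = x h + Σ_{j=1}^{m} x'_j h'_j with {h, h'_1, …, h'_m} linearly independent in ℂⁿ (so n ≥ m+1), and x, x'_1, …, x'_m are mutually independent zero-mean with positive variances, then G = E[YY*]⁺ E[Y x̄] satisfies ⟨G, Y⟩ = x almost surely. -/
open MeasureTheory Matrix Finset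
open scoped ComplexConjugate BigOperators

noncomputable section

/-! With `V` the matrix with columns `h, h'_j` and `Z = (x, x'_j)` we have `Y = V Z`. Independence
and zero means make the coordinates of `Z` uncorrelated, so `E[Y Y*] = V D Vᴴ` and
`E[Y x̄] = V D e₀`, with `D` the diagonal matrix of the (positive) variances. Since `V` has
independent columns, `Vᴴ` is onto, so `E[Y x̄]` lies in the range of `R = E[Y Y*]` and
`R R⁺ E[Y x̄] = E[Y x̄]`; cancelling the injective `V` and `D` gives `Vᴴ G = e₀`, hence
`⟨G, Y⟩ = ⟨Vᴴ G, Z⟩ = x` at every outcome. -/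

namespace Matrix

variable {m k 𝕜 : Type*} [Fintype m] [Fintype k] [DecidableEq k] [RCLike 𝕜]

open scoped ComplexOrder in
theorem mulVec_conjTranspose_surjective {A : Matrix m k 𝕜} (hA : Function.Injective A.mulVec) :
    Function.Surjective Aᴴ.mulVec := by
  have hAA : Function.Injective (Aᴴ * A).mulVec := fun v w hvw => by
    have h : (Aᴴ * A) *ᵥ (v - w) = 0 := by rw [mulVec_sub, hvw, sub_self]
    rw [conjTranspose_mul_self_mulVec_eq_zero, mulVec_sub, sub_eq_zero] at h
    exact hA h
  obtain ⟨B, hB⟩ := (mulVec_injective_iff_isUnit.mp hAA).exists_right_inv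
  exact mulVec_surjective_iff_exists_right_inverse.mpr ⟨A * B, by rw [← Matrix.mul_assoc, hB]⟩

theorem conjTranspose_mulVec_pinv_mulVec {V : Matrix m k 𝕜} (hV : Function.Injective V.mulVec)
    {D : Matrix k k 𝕜} (hD : Function.Injective D.mulVec) {Rp : Matrix m m 𝕜}
    (hRp : V * D * Vᴴ * Rp * (V * D * Vᴴ) = V * D * Vᴴ) (e : k → 𝕜) :
    Vᴴ *ᵥ (Rp *ᵥ (V *ᵥ (D *ᵥ e))) = e := by
  obtain ⟨u, rfl⟩ := mulVec_conjTranspose_surjective hV e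
  apply hD
  apply hV
  simpa only [mulVec_mulVec, Matrix.mul_assoc] using congrArg (· *ᵥ u) hRp

end Matrix

theorem herm_mulVec {n p : ℕ} (G : Fin n → ℂ) (A : Matrix (Fin n) (Fin p) ℂ) (z : Fin p → ℂ) :
    herm G (A *ᵥ z) = herm (Aᴴ *ᵥ G) z := by
  change star G ⬝ᵥ A *ᵥ z = star (Aᴴ *ᵥ G) ⬝ᵥ z
  rw [dotProduct_mulVec, star_mulVec, conjTranspose_conjTranspose]

section Moments

open ProbabilityTheory

variable {Ω : Type} [MeasurableSpace Ω] {μ : Measure Ω}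

theorem secondMoment_mulVec {n p : ℕ} (A : Matrix (Fin n) (Fin p) ℂ) {Z : Ω → Fin p → ℂ}
    (hZ : ∀ k l, Integrable (fun ω => Z ω k * conj (Z ω l)) μ) :
    secondMoment μ (fun ω => A *ᵥ Z ω) = A * secondMoment μ Z * Aᴴ := by
  ext i j
  simp only [secondMoment, mul_apply, of_apply, conjTranspose_apply, mulVec, dotProduct, map_sum,
    Finset.sum_mul, Finset.mul_sum]
  have hterm : ∀ ω a b, A i b * Z ω b * conj (A j a * Z ω a)
      = A i b * conj (A j a) * (Z ω b * conj (Z ω a)) := fun ω a b => by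
    rw [map_mul]; ring
  simp_rw [hterm]
  rw [integral_finsetSum _ fun a _ => integrable_finsetSum _ fun b _ => (hZ b a).const_mul _]
  refine Finset.sum_congr rfl fun a _ => ?_
  rw [integral_finsetSum _ fun b _ => (hZ b a).const_mul _]
  refine Finset.sum_congr rfl fun b _ => ?_
  rw [integral_const_mul, Complex.star_def]
  ring

theorem crossCorr_mulVec {n p : ℕ} (A : Matrix (Fin n) (Fin p) ℂ) {Z : Ω → Fin p → ℂ} {X : Ω → ℂ}
    (hZ : ∀ k, Integrable (fun ω => Z ω k * conj (X ω)) μ) :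
    crossCorr μ (fun ω => A *ᵥ Z ω) X = A *ᵥ crossCorr μ Z X := by
  ext i
  simp only [crossCorr, mulVec, dotProduct, Finset.sum_mul]
  simp_rw [mul_assoc]
  rw [integral_finsetSum _ fun k _ => (hZ k).const_mul _]
  simp_rw [integral_const_mul]

theorem secondMoment_eq_diagonal_of_iIndepFun {p : ℕ} {ζ : Fin p → Ω → ℂ} (hζ : ∀ k, MemLp (ζ k) 2 μ)
    (hind : iIndepFun ζ μ) (hmean : ∀ k, ∫ ω, ζ k ω ∂μ = 0) :
    secondMoment μ (fun ω k => ζ k ω) = diagonal fun k => ((∫ ω, ‖ζ k ω‖ ^ 2 ∂μ : ℝ) : ℂ) := by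
  ext k l
  rcases eq_or_ne k l with rfl | hkl
  · simp only [secondMoment, of_apply, diagonal_apply_eq, Complex.mul_conj', ← Complex.ofReal_pow]
    exact integral_ofReal
  · have hind' : IndepFun (ζ k) (fun ω => conj (ζ l ω)) μ :=
      (hind.indepFun hkl).comp measurable_id Complex.continuous_conj.measurable
    simp only [secondMoment, of_apply, diagonal_apply_ne _ hkl]
    rw [hind'.integral_fun_mul_eq_mul_integral (hζ k).1 (hζ l).star.1]
    simp [hmean k]

end Moments

theorem bic_perfect_recovery_multi_general {n m : ℕ}
    {Ω : Type} [MeasurableSpace Ω] (μ : Measure Ω)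
    (h : Fin n → ℂ) (h' : Fin m → Fin n → ℂ)
    (hli : LinearIndependent ℂ (Fin.cons h h' : Fin (m + 1) → Fin n → ℂ))
    (x : Ω → ℂ) (x' : Fin m → Ω → ℂ)
    (hx2 : MemLp x 2 μ) (hx'2 : ∀ j, MemLp (x' j) 2 μ)
    (hindep : ProbabilityTheory.iIndepFun
      (Fin.cons x x' : Fin (m + 1) → Ω → ℂ) μ)
    (hmx : ∫ ω, x ω ∂μ = 0) (hmx' : ∀ j, ∫ ω, x' j ω ∂μ = 0)
    (hvx : 0 < ∫ ω, ‖x ω‖ ^ 2 ∂μ) (hvx' : ∀ j, 0 < ∫ ω, ‖x' j ω‖ ^ 2 ∂μ)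
    (Y : Ω → Fin n → ℂ) (hYdef : ∀ ω, Y ω = x ω • h + ∑ j, x' j ω • h' j)
    (Rp : Matrix (Fin n) (Fin n) ℂ) (hRp : IsPinv (secondMoment μ Y) Rp) :
    ∀ᵐ ω ∂μ, herm (Rp.mulVec (crossCorr μ Y x)) (Y ω) = x ω := by
  set ζ : Fin (m + 1) → Ω → ℂ := Fin.cons x x'
  let V : Matrix (Fin n) (Fin (m + 1)) ℂ :=
    of fun i k => (Fin.cons h h' : Fin (m + 1) → Fin n → ℂ) k i
  let σ : Fin (m + 1) → ℂ := fun k => ((∫ ω, ‖ζ k ω‖ ^ 2 ∂μ : ℝ) : ℂ)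
  have hζ : ∀ k, MemLp (ζ k) 2 μ := fun k => Fin.cases hx2 hx'2 k
  have hσ : ∀ k, 0 < ∫ ω, ‖ζ k ω‖ ^ 2 ∂μ := fun k => Fin.cases hvx hvx' k
  have hmoment := secondMoment_eq_diagonal_of_iIndepFun hζ hindep fun k => Fin.cases hmx hmx' k
  have hY : Y = fun ω => V *ᵥ fun k => ζ k ω := by
    funext ω i
    simp [hYdef, V, ζ, mulVec, dotProduct, Fin.sum_univ_succ, Finset.sum_apply, mul_comm]
  have hV : Function.Injective V.mulVec := mulVec_injective_iff.mpr hli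
  have hD : Function.Injective (diagonal σ).mulVec := by
    refine mulVec_injective_iff_isUnit.mpr (isUnit_diagonal.mpr (Pi.isUnit_iff.mpr fun k => ?_))
    exact (Complex.ofReal_ne_zero.mpr (hσ k).ne').isUnit
  have hR : secondMoment μ Y = V * diagonal σ * Vᴴ := by
    rw [hY, secondMoment_mulVec V fun k l => (hζ k).integrable_mul (hζ l).star, hmoment]
  -- `x = ζ 0`, so `E[Z x̄]` is the `0`-th column of `E[Z Z*]`.
  have hr : crossCorr μ Y x = V *ᵥ (diagonal σ *ᵥ Pi.single 0 1) := by
    rw [hY, crossCorr_mulVec V fun k => (hζ k).integrable_mul hx2.star, ← hmoment,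
      mulVec_single_one]
    rfl
  have hG := conjTranspose_mulVec_pinv_mulVec hV hD (hR ▸ hRp.1) (Pi.single 0 1)
  refine Filter.Eventually.of_forall fun ω => ?_
  rw [hr, congrFun hY ω, herm_mulVec, hG]
  simp [herm, Pi.single_apply, ζ]

theorem bic_perfect_recovery_multi {n m : ℕ} (hn : m + 1 ≤ n)
    {Ω : Type} [MeasurableSpace Ω] (μ : Measure Ω) [IsProbabilityMeasure μ]
    (h : Fin n → ℂ) (h' : Fin m → Fin n → ℂ)
    (hli : LinearIndependent ℂ (Fin.cons h h' : Fin (m + 1) → Fin n → ℂ))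
    (x : Ω → ℂ) (x' : Fin m → Ω → ℂ)
    (hx2 : MemLp x 2 μ) (hx'2 : ∀ j, MemLp (x' j) 2 μ)
    (hindep : ProbabilityTheory.iIndepFun
      (Fin.cons x x' : Fin (m + 1) → Ω → ℂ) μ)
    (hmx : ∫ ω, x ω ∂μ = 0) (hmx' : ∀ j, ∫ ω, x' j ω ∂μ = 0)
    (hvx : 0 < ∫ ω, ‖x ω‖ ^ 2 ∂μ) (hvx' : ∀ j, 0 < ∫ ω, ‖x' j ω‖ ^ 2 ∂μ)
    (Y : Ω → Fin n → ℂ) (hYdef : ∀ ω, Y ω = x ω • h + ∑ j, x' j ω • h' j)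
    (Rp : Matrix (Fin n) (Fin n) ℂ) (hRp : IsPinv (secondMoment μ Y) Rp) :
    ∀ᵐ ω ∂μ, herm (Rp.mulVec (crossCorr μ Y x)) (Y ω) = x ω :=
  bic_perfect_recovery_multi_general μ h h' hli x x' hx2 hx'2 hindep hmx hmx' hvx hvx' Y hYdef Rp
    hRp
end
end
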